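/- Let f, g : ℝⁿ → ℝ ∪ {∞} be proper polyhedral convex functions and let h := f □ g be their infimal convolution, h(x) = inf_y { f(x−y) + g(y) }. If x ∈ ℝⁿ satisfies h(x) < ∞, then h(x) = h**(x), where h** is the biconjugate (Fenchel conjugate applied twice). -/

import Mathlib

open scoped RealInnerProductSpace

/-- A function is polyhedral iff its epigraph is an intersection of finitely many
closed halfspaces of `ℝⁿ × ℝ`. -/
def IsPolyhedralFn {n : ℕ} (g : EuclideanSpace ℝ (Fin n) → EReal) : Prop :=
  ∃ (m : ℕ) (a : Fin m → EuclideanSpace ℝ (Fin n)) (r b : Fin m → ℝ),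
    {p : EuclideanSpace ℝ (Fin n) × ℝ | g p.1 ≤ (p.2 : EReal)} =
      {p : EuclideanSpace ℝ (Fin n) × ℝ | ∀ i, ⟪a i, p.1⟫ + r i * p.2 ≤ b i}

def EProper {n : ℕ} (g : EuclideanSpace ℝ (Fin n) → EReal) : Prop :=
  (∃ x, g x ≠ ⊤) ∧ ∀ x, g x ≠ ⊥

/-- Fenchel conjugate. -/
noncomputable def EConj {n : ℕ} (g : EuclideanSpace ℝ (Fin n) → EReal) :
    EuclideanSpace ℝ (Fin n) → EReal :=
  fun v => ⨆ x, ((⟪v, x⟫ : ℝ) : EReal) - g x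

/-!
The set `{((x, w), (y, s)) | f (x - y) ≤ s, g y ≤ w - s}` is polyhedral, and so is its projection
to `(x, w)` by Fourier–Motzkin elimination. That projection lies between the strict epigraph and
the epigraph of `f □ g`; being closed, it is the epigraph, so `f □ g` has a polyhedral epigraph.
If `t < h x < ⊤` for such an `h`, one of the finitely many inequalities cuts off `(x, t)` while
admitting `(x, h x)`, so its coefficient of the epigraph variable is negative and it describes an
affine minorant of `h` exceeding `t` at `x`. The biconjugate dominates every affine minorant.
-/

theorem Set.Finite.upperBounds_inter_lowerBounds_nonempty {α : Type*}
    [ConditionallyCompleteLattice α] [Nonempty α] {A B : Set α} (hA : A.Finite) (hB : B.Finite)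
    (hAB : ∀ a ∈ A, ∀ b ∈ B, a ≤ b) : (upperBounds A ∩ lowerBounds B).Nonempty := by
  rcases A.eq_empty_or_nonempty with rfl | hne
  · obtain ⟨t, ht⟩ := hB.bddBelow
    exact ⟨t, by simp, ht⟩
  · exact ⟨sSup A, fun a ha => le_csSup hA.bddAbove ha,
      fun b hb => csSup_le hne fun a ha => hAB a ha b hb⟩

/-- Fourier–Motzkin elimination of one real variable. -/
theorem exists_forall_add_mul_le_iff {ι : Type*} [Finite ι] (c r b : ι → ℝ) :
    (∃ t, ∀ i, c i + t * r i ≤ b i) ↔ (∀ i, r i = 0 → c i ≤ b i) ∧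
      ∀ i j, 0 < r i ∧ r j < 0 → r i * c j - r j * c i ≤ r i * b j - r j * b i := by
  constructor
  · rintro ⟨t, ht⟩
    refine ⟨fun i hi => by simpa [hi] using ht i, fun i j ⟨hi, hj⟩ => ?_⟩
    nlinarith [ht i, ht j]
  · rintro ⟨hzero, hpair⟩
    obtain ⟨t, hlower, hupper⟩ := Set.Finite.upperBounds_inter_lowerBounds_nonempty
      ((Set.toFinite {j | r j < 0}).image fun j => (b j - c j) / r j)
      ((Set.toFinite {i | 0 < r i}).image fun i => (b i - c i) / r i)
      (by
        rintro _ ⟨j, hj, rfl⟩ _ ⟨i, hi, rfl⟩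
        simp only [Set.mem_ofPred_eq] at hi hj
        rw [div_le_iff_of_neg hj, div_mul_eq_mul_div, div_le_iff₀ hi]
        linarith [hpair i j ⟨hi, hj⟩])
    refine ⟨t, fun i => ?_⟩
    rcases lt_trichotomy (r i) 0 with hi | hi | hi
    · have := hlower ⟨i, hi, rfl⟩
      rw [div_le_iff_of_neg hi] at this
      linarith
    · simpa [hi] using hzero i hi
    · have := hupper ⟨i, hi, rfl⟩
      rw [le_div_iff₀ hi] at this
      linarith

theorem LinearMap.apply_prodMk_real {V : Type*} [AddCommGroup V] [Module ℝ V]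
    (φ : V × ℝ →ₗ[ℝ] ℝ) (x : V) (t : ℝ) : φ (x, t) = φ (x, 0) + t * φ (0, 1) := by
  rw [← smul_eq_mul, ← map_smul, ← map_add]
  simp

def IsPolyhedralSet {V : Type*} [AddCommGroup V] [Module ℝ V] (S : Set V) : Prop :=
  ∃ (ι : Type) (_ : Finite ι) (φ : ι → V →ₗ[ℝ] ℝ) (b : ι → ℝ), S = {x | ∀ i, φ i x ≤ b i}

namespace IsPolyhedralSet

variable {V W : Type*} [AddCommGroup V] [Module ℝ V] [AddCommGroup W] [Module ℝ W]

theorem univ : IsPolyhedralSet (Set.univ : Set V) :=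
  ⟨Empty, inferInstance, Empty.elim, Empty.elim, by simp⟩

theorem halfspace (φ : V →ₗ[ℝ] ℝ) (b : ℝ) : IsPolyhedralSet {x | φ x ≤ b} :=
  ⟨Unit, inferInstance, fun _ => φ, fun _ => b, by simp⟩

theorem imp_halfspace (p : Prop) (φ : V →ₗ[ℝ] ℝ) (b : ℝ) :
    IsPolyhedralSet {x | p → φ x ≤ b} := by
  by_cases hp : p
  · simpa only [hp, true_imp_iff] using halfspace φ b
  · simpa only [hp, false_imp_iff, Set.ofPred_true] using univ

theorem iInter {κ : Type} [Finite κ] {S : κ → Set V} (hS : ∀ k, IsPolyhedralSet (S k)) :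
    IsPolyhedralSet (⋂ k, S k) := by
  choose ι _ φ b hS using hS
  refine ⟨Σ k, ι k, inferInstance, fun i => φ i.1 i.2, fun i => b i.1 i.2, ?_⟩
  ext x
  simp [hS, Sigma.forall]

theorem inter {S T : Set V} (hS : IsPolyhedralSet S) (hT : IsPolyhedralSet T) :
    IsPolyhedralSet (S ∩ T) := by
  rw [Set.inter_eq_iInter]
  exact iInter (Bool.rec hT hS)

theorem preimage {S : Set V} (hS : IsPolyhedralSet S) (L : W →ₗ[ℝ] V) :
    IsPolyhedralSet (L ⁻¹' S) := by
  obtain ⟨ι, _, φ, b, rfl⟩ := hS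
  exact ⟨ι, ‹_›, fun i => φ i ∘ₗ L, b, rfl⟩

theorem isClosed [TopologicalSpace V] [IsTopologicalAddGroup V] [ContinuousSMul ℝ V]
    [T2Space V] [FiniteDimensional ℝ V] {S : Set V} (hS : IsPolyhedralSet S) : IsClosed S := by
  obtain ⟨ι, _, φ, b, rfl⟩ := hS
  simp only [Set.ofPred_forall]
  exact isClosed_iInter fun i => isClosed_le (φ i).continuous_of_finiteDimensional continuous_const

theorem image_fst_real {S : Set (V × ℝ)} (hS : IsPolyhedralSet S) :
    IsPolyhedralSet (Prod.fst '' S) := by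
  obtain ⟨ι, _, φ, b, rfl⟩ := hS
  set ψ : ι → V →ₗ[ℝ] ℝ := fun i => φ i ∘ₗ LinearMap.inl ℝ V ℝ
  set r : ι → ℝ := fun i => φ i (0, 1)
  have hφ (i : ι) (x : V) (t : ℝ) : φ i (x, t) = ψ i x + t * r i := (φ i).apply_prodMk_real x t
  have hproj : Prod.fst '' {p | ∀ i, φ i p ≤ b i} =
      (⋂ i, {x | r i = 0 → ψ i x ≤ b i}) ∩ ⋂ p : ι × ι,
        {x | 0 < r p.1 ∧ r p.2 < 0 →
          (r p.1 • ψ p.2 - r p.2 • ψ p.1) x ≤ r p.1 * b p.2 - r p.2 * b p.1} := by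
    ext x
    simp [hφ, exists_forall_add_mul_le_iff]
  rw [hproj]
  exact (iInter fun i => imp_halfspace _ _ _).inter (iInter fun p => imp_halfspace _ _ _)

theorem image_fst_pi {k : ℕ} {S : Set (V × (Fin k → ℝ))} (hS : IsPolyhedralSet S) :
    IsPolyhedralSet (Prod.fst '' S) := by
  induction k generalizing V with
  | zero =>
    convert hS.preimage (LinearMap.inl ℝ V _) using 1
    ext x
    refine ⟨?_, fun hx => ⟨_, hx, rfl⟩⟩
    rintro ⟨⟨x, w⟩, hw, rfl⟩
    rwa [Subsingleton.elim w 0] at hw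
  | succ k ih =>
    let e := (LinearEquiv.prodAssoc ℝ V ℝ _).trans
      ((LinearEquiv.refl ℝ V).prodCongr (Fin.consLinearEquiv ℝ fun _ : Fin (k + 1) => ℝ))
    convert image_fst_real (ih (hS.preimage e.toLinearMap)) using 1
    ext x
    constructor
    · rintro ⟨⟨x, w⟩, hw, rfl⟩
      refine ⟨(x, w 0), ⟨((x, w 0), Fin.tail w), ?_, rfl⟩, rfl⟩
      show (x, Fin.cons (w 0) (Fin.tail w)) ∈ S
      rwa [Fin.cons_self_tail]
    · rintro ⟨_, ⟨_, hw, rfl⟩, rfl⟩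
      exact ⟨_, hw, rfl⟩

theorem image_fst [FiniteDimensional ℝ W] {S : Set (V × W)} (hS : IsPolyhedralSet S) :
    IsPolyhedralSet (Prod.fst '' S) := by
  let e := (Module.finBasis ℝ W).equivFun
  convert image_fst_pi (hS.preimage (LinearMap.id.prodMap e.symm.toLinearMap)) using 1
  ext x
  refine ⟨?_, fun ⟨_, hw, hx⟩ => ⟨_, hw, hx⟩⟩
  rintro ⟨⟨x, w⟩, hw, rfl⟩
  exact ⟨(x, e w), by simpa using hw, rfl⟩

end IsPolyhedralSet

def epigraph {X : Type*} (h : X → EReal) : Set (X × ℝ) := {p | h p.1 ≤ p.2}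

theorem epigraph_eq_of_isClosed {X : Type*} [TopologicalSpace X] {h : X → EReal}
    {P : Set (X × ℝ)} (hP : IsClosed P) (hlt : ∀ x (w : ℝ), h x < w → (x, w) ∈ P)
    (hle : P ⊆ epigraph h) : P = epigraph h := by
  refine hle.antisymm fun ⟨x, w⟩ hxw => ?_
  have hlim : Filter.Tendsto (fun s : ℝ => (x, s)) (nhdsWithin w (Set.Ioi w)) (nhds (x, w)) :=
    ((continuous_const.prodMk continuous_id).tendsto w).mono_left nhdsWithin_le_nhds
  exact hP.mem_of_tendsto hlim (eventually_nhdsWithin_of_forall fun s hs =>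
    hlt x s (lt_of_le_of_lt hxw (EReal.coe_lt_coe_iff.2 hs)))

theorem IsPolyhedralFn.isPolyhedralSet_epigraph {n : ℕ} {f : EuclideanSpace ℝ (Fin n) → EReal}
    (hf : IsPolyhedralFn f) : IsPolyhedralSet (epigraph f) := by
  obtain ⟨m, a, r, b, hepi⟩ := hf
  refine ⟨Fin m, inferInstance,
    fun i => innerₛₗ ℝ (a i) ∘ₗ LinearMap.fst ℝ _ ℝ + r i • LinearMap.snd ℝ _ ℝ, b, ?_⟩
  rw [epigraph, hepi]
  ext p
  simp

noncomputable def infConv {X : Type*} [AddGroup X] (f g : X → EReal) (x : X) : EReal :=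
  ⨅ y, f (x - y) + g y

theorem isPolyhedralSet_epigraph_infConv {n : ℕ} {f g : EuclideanSpace ℝ (Fin n) → EReal}
    (hf : ∀ x, f x ≠ ⊥) (hg : ∀ x, g x ≠ ⊥) (hfpoly : IsPolyhedralFn f)
    (hgpoly : IsPolyhedralFn g) : IsPolyhedralSet (epigraph (infConv f g)) := by
  let E := EuclideanSpace ℝ (Fin n)
  let L₁ : (E × ℝ) × (E × ℝ) →ₗ[ℝ] E × ℝ :=
    { toFun q := (q.1.1 - q.2.1, q.2.2)
      map_add' _ _ := by ext <;> simp [sub_add_sub_comm]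
      map_smul' _ _ := by ext <;> simp [smul_sub] }
  let L₂ : (E × ℝ) × (E × ℝ) →ₗ[ℝ] E × ℝ :=
    { toFun q := (q.2.1, q.1.2 - q.2.2)
      map_add' _ _ := by ext <;> simp; ring
      map_smul' _ _ := by ext <;> simp [mul_sub] }
  let P := Prod.fst '' (L₁ ⁻¹' epigraph f ∩ L₂ ⁻¹' epigraph g)
  have hP : IsPolyhedralSet P :=
    ((hfpoly.isPolyhedralSet_epigraph.preimage L₁).inter
      (hgpoly.isPolyhedralSet_epigraph.preimage L₂)).image_fst
  rw [← epigraph_eq_of_isClosed hP.isClosed ?_ ?_]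
  · exact hP
  · intro x w hxw
    obtain ⟨y, hy⟩ := iInf_lt_iff.1 hxw
    have hfy : f (x - y) ≠ ⊤ := fun htop => by
      rw [htop, EReal.top_add_of_ne_bot (hg y)] at hy
      exact not_top_lt hy
    set s := (f (x - y)).toReal
    have hs : f (x - y) = s := (EReal.coe_toReal hfy (hf _)).symm
    refine ⟨((x, w), (y, s)), ⟨hs.le, ?_⟩, rfl⟩
    rw [hs, add_comm] at hy
    show g y ≤ ((w - s : ℝ) : EReal)
    rw [EReal.coe_sub]
    exact ((EReal.lt_sub_iff_add_lt (.inl (EReal.coe_ne_bot s)) (.inl (EReal.coe_ne_top s))).2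
      hy).le
  · rintro _ ⟨⟨⟨x, w⟩, y, s⟩, ⟨hf', hg'⟩, rfl⟩
    calc infConv f g x ≤ f (x - y) + g y := iInf_le _ y
      _ ≤ ((s + (w - s) : ℝ) : EReal) := by rw [EReal.coe_add]; exact add_le_add hf' hg'
      _ = w := by ring_nf

theorem eConj_eConj_le {n : ℕ} (h : EuclideanSpace ℝ (Fin n) → EReal)
    (x : EuclideanSpace ℝ (Fin n)) : EConj (EConj h) x ≤ h x := by
  refine iSup_le fun v => ?_
  have hv : ((⟪v, x⟫ : ℝ) : EReal) - h x ≤ EConj h v :=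
    le_iSup (fun z => ((⟪v, z⟫ : ℝ) : EReal) - h z) x
  calc ((⟪x, v⟫ : ℝ) : EReal) - EConj h v ≤ ((⟪x, v⟫ : ℝ) : EReal) - (⟪v, x⟫ - h x) :=
        EReal.sub_le_sub le_rfl hv
    _ = h x := by
      rw [real_inner_comm]
      induction h x <;> simp [← EReal.coe_sub]

theorem le_eConj_eConj_of_affine_minorant {n : ℕ} {h : EuclideanSpace ℝ (Fin n) → EReal}
    {v : EuclideanSpace ℝ (Fin n)} {β : ℝ} (hv : ∀ z, ((⟪v, z⟫ - β : ℝ) : EReal) ≤ h z)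
    (x : EuclideanSpace ℝ (Fin n)) : ((⟪v, x⟫ - β : ℝ) : EReal) ≤ EConj (EConj h) x := by
  have hconj : EConj h v ≤ β := iSup_le fun z => by
    refine EReal.sub_le_of_le_add ?_
    rw [add_comm,
      ← EReal.sub_le_iff_le_add (.inl (EReal.coe_ne_bot β)) (.inl (EReal.coe_ne_top β))]
    exact hv z
  calc ((⟪v, x⟫ - β : ℝ) : EReal) = ((⟪x, v⟫ : ℝ) : EReal) - β := by rw [real_inner_comm]; rfl
    _ ≤ ((⟪x, v⟫ : ℝ) : EReal) - EConj h v := EReal.sub_le_sub le_rfl hconj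
    _ ≤ EConj (EConj h) x := le_iSup (fun w => ((⟪x, w⟫ : ℝ) : EReal) - EConj h w) v

theorem IsPolyhedralSet.exists_affine_minorant {E : Type*} [NormedAddCommGroup E]
    [InnerProductSpace ℝ E] [FiniteDimensional ℝ E] {h : E → EReal}
    (hepi : IsPolyhedralSet (epigraph h)) {x : E} (hx : h x ≠ ⊤) {t : ℝ} (ht : t < h x) :
    ∃ (v : E) (β : ℝ), (∀ z, ((⟪v, z⟫ - β : ℝ) : EReal) ≤ h z) ∧ t < ⟪v, x⟫ - β := by
  obtain ⟨ι, _, φ, b, hS⟩ := hepi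
  have hmem (z : E) (s : ℝ) : h z ≤ s ↔ ∀ i, φ i (z, s) ≤ b i := Set.ext_iff.1 hS (z, s)
  set c := (h x).toReal
  have hc : h x = c := (EReal.coe_toReal hx ht.ne_bot).symm
  obtain ⟨i, hi⟩ : ∃ i, b i < φ i (x, t) := by
    by_contra! hall
    exact ht.not_ge ((hmem x t).2 hall)
  have hic := (hmem x c).1 hc.le i
  set ρ := φ i (0, 1)
  rw [LinearMap.apply_prodMk_real] at hi hic
  have hρ : ρ < 0 := by
    have htc : t < c := EReal.coe_lt_coe_iff.1 (hc ▸ ht)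
    nlinarith
  set a := (InnerProductSpace.toDual ℝ E).symm (φ i ∘ₗ LinearMap.inl ℝ E ℝ).toContinuousLinearMap
  have hv (z : E) : ⟪(-ρ)⁻¹ • a, z⟫ - (-ρ)⁻¹ * b i = (φ i (z, 0) - b i) / -ρ := by
    simp [a, real_inner_smul_left, InnerProductSpace.toDual_symm_apply]
    ring
  refine ⟨(-ρ)⁻¹ • a, (-ρ)⁻¹ * b i, fun z => ?_, ?_⟩
  · refine EReal.le_of_forall_lt_iff_le.1 fun s hs => ?_
    have hzs := (hmem z s).1 hs.le i
    rw [LinearMap.apply_prodMk_real] at hzs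
    rw [hv, EReal.coe_le_coe_iff, div_le_iff₀ (neg_pos.2 hρ)]
    linarith
  · rw [hv, lt_div_iff₀ (neg_pos.2 hρ)]
    linarith

/-- if `f, g` are proper polyhedral convex and `h = f □ g` is their
infimal convolution, then `h(x) = h**(x)` at every point where `h(x) < ∞`. -/
theorem stmt4 {n : ℕ} (f g : EuclideanSpace ℝ (Fin n) → EReal)
    (hfp : EProper f) (hgp : EProper g)
    (hfpoly : IsPolyhedralFn f) (hgpoly : IsPolyhedralFn g)
    (h : EuclideanSpace ℝ (Fin n) → EReal)
    (hh : ∀ x, h x = ⨅ y, f (x - y) + g y)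
    (x : EuclideanSpace ℝ (Fin n)) (hx : h x ≠ ⊤) :
    EConj (EConj h) x = h x := by
  have hepi : IsPolyhedralSet (epigraph h) := by
    rw [show h = infConv f g from funext hh]
    exact isPolyhedralSet_epigraph_infConv hfp.2 hgp.2 hfpoly hgpoly
  refine le_antisymm (eConj_eConj_le h x) (EReal.ge_of_forall_gt_iff_ge.1 fun t ht => ?_)
  obtain ⟨v, β, hminor, hlt⟩ := hepi.exists_affine_minorant hx ht
  exact (EReal.coe_le_coe_iff.2 hlt.le).trans (le_eConj_eConj_of_affine_minorant hminor x)
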